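/- arXiv:2510.08154 — 6 statements merged into one kernel-verified Lean document; each statement's English description precedes it below -/
import Mathlib

section
/- Let d, m, n be positive natural numbers and let Φ be a ℂ-linear map from Matrix ((Fin m → Fin d)) ((Fin m → Fin d)) ℂ to Matrix ((Fin n → Fin d)) ((Fin n → Fin d)) ℂ. Then Φ is unitary-equivariant, i.e. for every U in the special unitary group SU(d) and every matrix A one has Φ(U^{⊗m} · A · (U^{⊗m})ᴴ) = U^{⊗n} · Φ(A) · (U^{⊗n})ᴴ, if and only if for every U ∈ SU(d) the Choi matrix C_Φ commutes with the matrix W_U indexed by ((Fin m → Fin d) × (Fin n → Fin d)) whose entries are W_U((i,k),(j,l)) = (∏ t, conj (U (i t) (j t))) · (∏ s, U (k s) (l s)) (i.e. with conj(U)^{⊗m} ⊗ U^{⊗n}). -/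
/-!
Write `V⊗ᵏ` for `tensorPow d k V`. The matrix `W_U` is the Kronecker product
`((U⋆)⊗ᵐ)ᵀ ⊗ U⊗ⁿ`, and for any `X`, `Y` the entries of `(Xᵀ ⊗ Y) C_Φ` and `C_Φ (Xᵀ ⊗ Y)` are
those of `Y Φ(X E_ij)` and `Φ(E_ij X) Y`. So `W_U` commutes with `C_Φ` iff
`Y Φ(X B) = Φ(B X) Y` for all `B`, with `X = (U⋆)⊗ᵐ` and `Y = U⊗ⁿ = ((U⋆)⊗ⁿ)⋆`. As `X` and `Y` are
unitary, the substitution `B = A X⋆` turns this into equivariance of `Φ` under `U⋆`, and `SU(d)`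
is closed under `⋆`.
-/

open Matrix

/-- The `k`-th tensor power of a `d × d` matrix, indexed by functions `Fin k → Fin d`. -/
noncomputable def tensorPow (d k : ℕ) (U : Matrix (Fin d) (Fin d) ℂ) :
    Matrix (Fin k → Fin d) (Fin k → Fin d) ℂ :=
  Matrix.of fun i j => ∏ t, U (i t) (j t)

/-- The Choi matrix of a linear map between matrix spaces. -/
noncomputable def choiMatrix (d m n : ℕ)
    (Φ : Matrix (Fin m → Fin d) (Fin m → Fin d) ℂ →ₗ[ℂ]
         Matrix (Fin n → Fin d) (Fin n → Fin d) ℂ) :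
    Matrix ((Fin m → Fin d) × (Fin n → Fin d)) ((Fin m → Fin d) × (Fin n → Fin d)) ℂ :=
  Matrix.of fun p q => Φ (Matrix.single p.1 q.1 1) p.2 q.2

open scoped Kronecker

lemma tensorPow_mul (d k : ℕ) (U V : Matrix (Fin d) (Fin d) ℂ) :
    tensorPow d k (U * V) = tensorPow d k U * tensorPow d k V := by
  ext i j
  simp only [tensorPow, of_apply, mul_apply, Finset.prod_univ_sum, Fintype.piFinset_univ,
    Finset.prod_mul_distrib]

lemma tensorPow_one (d k : ℕ) : tensorPow d k (1 : Matrix (Fin d) (Fin d) ℂ) = 1 := by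
  ext i j
  by_cases h : i = j
  · subst h
    simp [tensorPow]
  · obtain ⟨t, ht⟩ := Function.ne_iff.mp h
    rw [Matrix.one_apply_ne h, tensorPow, of_apply]
    exact Finset.prod_eq_zero (Finset.mem_univ t) (Matrix.one_apply_ne ht)

lemma tensorPow_star (d k : ℕ) (U : Matrix (Fin d) (Fin d) ℂ) :
    tensorPow d k (star U) = star (tensorPow d k U) := by
  ext i j
  simp [tensorPow]

lemma tensorPow_mem_unitaryGroup {d : ℕ} (k : ℕ) {U : Matrix (Fin d) (Fin d) ℂ}
    (hU : U ∈ unitaryGroup (Fin d) ℂ) : tensorPow d k U ∈ unitaryGroup (Fin k → Fin d) ℂ := by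
  rw [mem_unitaryGroup_iff, ← tensorPow_star, ← tensorPow_mul, mem_unitaryGroup_iff.mp hU,
    tensorPow_one]

lemma mul_single_one_eq_sum {ι : Type*} [Fintype ι] [DecidableEq ι] {α : Type*} [Semiring α]
    (M : Matrix ι ι α) (i j : ι) :
    M * single i j 1 = ∑ a, M a i • single a j (1 : α) := by
  ext a b
  simp [mul_apply, single, Matrix.sum_apply, mul_ite, ite_and, Finset.sum_ite_eq]

lemma single_one_mul_eq_sum {ι : Type*} [Fintype ι] [DecidableEq ι] {α : Type*} [Semiring α]
    (M : Matrix ι ι α) (i j : ι) :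
    single i j 1 * M = ∑ b, M j b • single i b (1 : α) := by
  ext a b
  simp [mul_apply, single, Matrix.sum_apply, ite_mul, ite_and, Finset.sum_ite_eq]

section Choi

variable {d m n : ℕ}
  (Φ : Matrix (Fin m → Fin d) (Fin m → Fin d) ℂ →ₗ[ℂ] Matrix (Fin n → Fin d) (Fin n → Fin d) ℂ)
  (X : Matrix (Fin m → Fin d) (Fin m → Fin d) ℂ) (Y : Matrix (Fin n → Fin d) (Fin n → Fin d) ℂ)

lemma kronecker_mul_choiMatrix_apply (i j : Fin m → Fin d) (k l : Fin n → Fin d) :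
    (Xᵀ ⊗ₖ Y * choiMatrix d m n Φ) (i, k) (j, l) = (Y * Φ (X * single i j 1)) k l := by
  rw [mul_single_one_eq_sum, map_sum]
  simp only [mul_apply, choiMatrix, kroneckerMap_apply, transpose_apply, of_apply, Matrix.sum_apply,
    Matrix.smul_apply, map_smul, smul_eq_mul, Fintype.sum_prod_type, Finset.mul_sum]
  rw [Finset.sum_comm]
  exact Finset.sum_congr rfl fun _ _ => Finset.sum_congr rfl fun _ _ => by ring

lemma choiMatrix_mul_kronecker_apply (i j : Fin m → Fin d) (k l : Fin n → Fin d) :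
    (choiMatrix d m n Φ * Xᵀ ⊗ₖ Y) (i, k) (j, l) = (Φ (single i j 1 * X) * Y) k l := by
  rw [single_one_mul_eq_sum, map_sum]
  simp only [mul_apply, choiMatrix, kroneckerMap_apply, transpose_apply, of_apply, Matrix.sum_apply,
    Matrix.smul_apply, map_smul, smul_eq_mul, Fintype.sum_prod_type, Finset.sum_mul]
  rw [Finset.sum_comm]
  exact Finset.sum_congr rfl fun _ _ => Finset.sum_congr rfl fun _ _ => by ring

lemma kronecker_commute_choiMatrix_iff :
    Xᵀ ⊗ₖ Y * choiMatrix d m n Φ = choiMatrix d m n Φ * Xᵀ ⊗ₖ Y ↔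
      ∀ B, Y * Φ (X * B) = Φ (B * X) * Y := by
  constructor
  · intro h
    have hext : LinearMap.mulLeft ℂ Y ∘ₗ Φ ∘ₗ LinearMap.mulLeft ℂ X =
        LinearMap.mulRight ℂ Y ∘ₗ Φ ∘ₗ LinearMap.mulRight ℂ X := by
      refine Matrix.ext_linearMap ℂ fun i j => LinearMap.ext_ring ?_
      ext k l
      simpa [← kronecker_mul_choiMatrix_apply, ← choiMatrix_mul_kronecker_apply] using
        congr_fun (congr_fun h (i, k)) (j, l)
    exact fun B => LinearMap.congr_fun hext B
  · intro h
    ext ⟨i, k⟩ ⟨j, l⟩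
    rw [kronecker_mul_choiMatrix_apply, choiMatrix_mul_kronecker_apply, h]

end Choi

lemma unitary_intertwining_iff {α β : Type*} [Monoid α] [StarMul α] [Monoid β] [StarMul β]
    (Φ : α → β) {X : α} (hX : X ∈ unitary α) {Y : β} (hY : Y ∈ unitary β) :
    (∀ B, star Y * Φ (X * B) = Φ (B * X) * star Y) ↔
      ∀ A, Φ (X * A * star X) = Y * Φ A * star Y := by
  constructor
  · intro h A
    have hA := h (A * star X)
    rw [mul_assoc A, Unitary.star_mul_self_of_mem hX, mul_one, ← mul_assoc] at hA
    rw [mul_assoc Y, ← hA, ← mul_assoc, Unitary.mul_star_self_of_mem hY, one_mul]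
  · intro h B
    have hB := h (B * X)
    rw [← mul_assoc X, mul_assoc (X * B), Unitary.mul_star_self_of_mem hX, mul_one] at hB
    rw [hB, ← mul_assoc, ← mul_assoc, Unitary.star_mul_self_of_mem hY, one_mul]

lemma kronecker_tensorPow_commute_choiMatrix_iff {d : ℕ} (m n : ℕ)
    (Φ : Matrix (Fin m → Fin d) (Fin m → Fin d) ℂ →ₗ[ℂ] Matrix (Fin n → Fin d) (Fin n → Fin d) ℂ)
    {U : Matrix (Fin d) (Fin d) ℂ} (hU : U ∈ unitaryGroup (Fin d) ℂ) :
    (tensorPow d m (star U))ᵀ ⊗ₖ tensorPow d n U * choiMatrix d m n Φ =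
        choiMatrix d m n Φ * (tensorPow d m (star U))ᵀ ⊗ₖ tensorPow d n U ↔
      ∀ A, Φ (tensorPow d m (star U) * A * (tensorPow d m (star U))ᴴ) =
        tensorPow d n (star U) * Φ A * (tensorPow d n (star U))ᴴ := by
  have hstarU := Unitary.star_mem hU
  have hY : tensorPow d n U = star (tensorPow d n (star U)) := by rw [tensorPow_star, star_star]
  rw [kronecker_commute_choiMatrix_iff, hY, ← star_eq_conjTranspose, ← star_eq_conjTranspose]
  exact unitary_intertwining_iff Φ (tensorPow_mem_unitaryGroup m hstarU)
    (tensorPow_mem_unitaryGroup n hstarU)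

lemma of_prod_star_mul_prod_eq_kronecker (d m n : ℕ) (U : Matrix (Fin d) (Fin d) ℂ) :
    (Matrix.of fun p q : (Fin m → Fin d) × (Fin n → Fin d) =>
        (∏ t, (starRingEnd ℂ) (U (p.1 t) (q.1 t))) * ∏ s, U (p.2 s) (q.2 s)) =
      (tensorPow d m (star U))ᵀ ⊗ₖ tensorPow d n U := by
  ext p q
  simp [tensorPow]

theorem unitary_equivariant_iff_choi_commutes_general (d m n : ℕ)
    (Φ : Matrix (Fin m → Fin d) (Fin m → Fin d) ℂ →ₗ[ℂ]
         Matrix (Fin n → Fin d) (Fin n → Fin d) ℂ) :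
    (∀ U : Matrix (Fin d) (Fin d) ℂ, U ∈ Matrix.specialUnitaryGroup (Fin d) ℂ →
      ∀ A : Matrix (Fin m → Fin d) (Fin m → Fin d) ℂ,
        Φ (tensorPow d m U * A * (tensorPow d m U)ᴴ)
          = tensorPow d n U * Φ A * (tensorPow d n U)ᴴ) ↔
    (∀ U : Matrix (Fin d) (Fin d) ℂ, U ∈ Matrix.specialUnitaryGroup (Fin d) ℂ →
      (Matrix.of fun p q : (Fin m → Fin d) × (Fin n → Fin d) =>
          (∏ t, (starRingEnd ℂ) (U (p.1 t) (q.1 t))) * ∏ s, U (p.2 s) (q.2 s)) *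
        choiMatrix d m n Φ
      = choiMatrix d m n Φ *
        (Matrix.of fun p q : (Fin m → Fin d) × (Fin n → Fin d) =>
          (∏ t, (starRingEnd ℂ) (U (p.1 t) (q.1 t))) * ∏ s, U (p.2 s) (q.2 s))) := by
  have hstar {U} (hU : U ∈ specialUnitaryGroup (Fin d) ℂ) :
      star U ∈ specialUnitaryGroup (Fin d) ℂ :=
    (star (⟨U, hU⟩ : specialUnitaryGroup (Fin d) ℂ)).2
  constructor
  · intro H U hU
    rw [of_prod_star_mul_prod_eq_kronecker,
      kronecker_tensorPow_commute_choiMatrix_iff m n Φ (specialUnitaryGroup_le_unitaryGroup hU)]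
    exact H _ (hstar hU)
  · intro H U hU
    have hcomm := H (star U) (hstar hU)
    rwa [of_prod_star_mul_prod_eq_kronecker, kronecker_tensorPow_commute_choiMatrix_iff m n Φ
      (specialUnitaryGroup_le_unitaryGroup (hstar hU)), star_star] at hcomm

theorem unitary_equivariant_iff_choi_commutes (d m n : ℕ)
    (hd : 0 < d) (hm : 0 < m) (hn : 0 < n)
    (Φ : Matrix (Fin m → Fin d) (Fin m → Fin d) ℂ →ₗ[ℂ]
         Matrix (Fin n → Fin d) (Fin n → Fin d) ℂ) :
    (∀ U : Matrix (Fin d) (Fin d) ℂ, U ∈ Matrix.specialUnitaryGroup (Fin d) ℂ →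
      ∀ A : Matrix (Fin m → Fin d) (Fin m → Fin d) ℂ,
        Φ (tensorPow d m U * A * (tensorPow d m U)ᴴ)
          = tensorPow d n U * Φ A * (tensorPow d n U)ᴴ) ↔
    (∀ U : Matrix (Fin d) (Fin d) ℂ, U ∈ Matrix.specialUnitaryGroup (Fin d) ℂ →
      (Matrix.of fun p q : (Fin m → Fin d) × (Fin n → Fin d) =>
          (∏ t, (starRingEnd ℂ) (U (p.1 t) (q.1 t))) * ∏ s, U (p.2 s) (q.2 s)) *
        choiMatrix d m n Φ
      = choiMatrix d m n Φ *
        (Matrix.of fun p q : (Fin m → Fin d) × (Fin n → Fin d) =>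
          (∏ t, (starRingEnd ℂ) (U (p.1 t) (q.1 t))) * ∏ s, U (p.2 s) (q.2 s))) :=
  unitary_equivariant_iff_choi_commutes_general d m n Φ
end

section
/- Let d, m, n be positive natural numbers and let Φ be a ℂ-linear map from Matrix ((Fin m → Fin d)) ((Fin m → Fin d)) ℂ to Matrix ((Fin n → Fin d)) ((Fin n → Fin d)) ℂ. Then Φ is permutation-invariant, i.e. for every σ ∈ Equiv.Perm (Fin m), τ ∈ Equiv.Perm (Fin n), and every matrix A one has Φ(P_σ · A · P_σᴴ) = Φ(A) and P_τ · Φ(A) · P_τᴴ = Φ(A), if and only if for every σ ∈ Equiv.Perm (Fin m) and τ ∈ Equiv.Perm (Fin n) the Choi matrix C_Φ commutes with the Kronecker product matrix indexed by ((Fin m → Fin d) × (Fin n → Fin d)) with entries ((i,k),(j,l)) ↦ P_σ(i,j) · P_τ(k,l). -/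
/-! A permutation matrix acts on a matrix by relabelling its indices, so `P_σ ⊗ P_τ` commutes with
`C_Φ` exactly when `C_Φ` is invariant under relabelling by `σ × τ`. The relabelled Choi matrix is
the Choi matrix of `A ↦ P_τ Φ(P_σᴴ A P_σ) P_τᴴ`, and a map is determined by its Choi matrix, so the
commutation condition says that `Φ` intertwines the two conjugation actions. Taking `σ = 1` or
`τ = 1` splits this into the two invariances. -/

open Matrix

/-- Permutation matrix of `σ` acting on `(ℂ^d)^{⊗ι}`, indexed by `ι → Fin d`. -/
noncomputable def permMatrix (d : ℕ) {ι : Type*} [Fintype ι] [DecidableEq ι]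
    (σ : Equiv.Perm ι) : Matrix (ι → Fin d) (ι → Fin d) ℂ :=
  Matrix.of fun a b => if a ∘ σ = b then 1 else 0

open scoped Kronecker

namespace Matrix

variable {m n R : Type*} [DecidableEq m] [DecidableEq n]

theorem permMatrix_mul_mul_conjTranspose_permMatrix [Fintype n] [NonAssocSemiring R] [StarRing R]
    (σ : Equiv.Perm n) (A : Matrix n n R) :
    σ.permMatrix R * A * (σ.permMatrix R)ᴴ = A.submatrix σ σ := by
  rw [conjTranspose_permMatrix, PEquiv.toMatrix_toPEquiv_mul, PEquiv.mul_toMatrix_toPEquiv,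
    submatrix_submatrix]
  rfl

theorem permMatrix_mul_eq_mul_permMatrix_iff [Fintype n] [NonAssocSemiring R]
    (σ : Equiv.Perm n) (C : Matrix n n R) :
    σ.permMatrix R * C = C * σ.permMatrix R ↔ C.submatrix σ σ = C := by
  rw [PEquiv.toMatrix_toPEquiv_mul, PEquiv.mul_toMatrix_toPEquiv]
  constructor
  · intro h
    simpa using congrArg (·.submatrix id σ) h
  · intro h
    conv_rhs => rw [← h]
    simp

theorem kronecker_permMatrix [MulZeroOneClass R] (σ : Equiv.Perm m) (τ : Equiv.Perm n) :
    σ.permMatrix R ⊗ₖ τ.permMatrix R = Equiv.Perm.permMatrix R (σ.prodCongr τ) := by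
  ext ⟨i, k⟩ ⟨j, l⟩
  simp [PEquiv.toMatrix_apply, ← ite_and, and_comm]

end Matrix

namespace Equiv.Perm

variable (α : Type*) {ι : Type*}

def precomp (σ : Perm ι) : Perm (ι → α) where
  toFun a := a ∘ σ
  invFun a := a ∘ σ.symm
  left_inv a := by ext; simp
  right_inv a := by ext; simp

@[simp]
theorem precomp_apply (σ : Perm ι) (a : ι → α) : σ.precomp α a = a ∘ σ :=
  rfl

@[simp]
theorem precomp_one : precomp α (1 : Perm ι) = Equiv.refl _ :=
  rfl

end Equiv.Perm

theorem permMatrix_eq_permMatrix_precomp (d : ℕ) {ι : Type*} [Fintype ι] [DecidableEq ι]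
    (σ : Equiv.Perm ι) : permMatrix d σ = (σ.precomp (Fin d)).permMatrix ℂ := by
  ext a b
  simp [permMatrix, PEquiv.toMatrix_apply]

namespace LinearMap

variable {α β R : Type*} [CommSemiring R]

/-- `A ↦ Q Φ(Pᴴ A P) Qᴴ`, where `P` and `Q` are the permutation matrices of `e` and `f`. -/
noncomputable def permConj (e : Equiv.Perm α) (f : Equiv.Perm β)
    (Φ : Matrix α α R →ₗ[R] Matrix β β R) : Matrix α α R →ₗ[R] Matrix β β R :=
  (reindexLinearEquiv R R f.symm f.symm).toLinearMap ∘ₗ Φ ∘ₗ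
    (reindexLinearEquiv R R e e).toLinearMap

@[simp]
theorem permConj_apply (e : Equiv.Perm α) (f : Equiv.Perm β)
    (Φ : Matrix α α R →ₗ[R] Matrix β β R) (A : Matrix α α R) :
    Φ.permConj e f A = (Φ (A.submatrix e.symm e.symm)).submatrix f f :=
  rfl

end LinearMap

theorem choiMatrix_permConj (d m n : ℕ)
    (Φ : Matrix (Fin m → Fin d) (Fin m → Fin d) ℂ →ₗ[ℂ]
         Matrix (Fin n → Fin d) (Fin n → Fin d) ℂ)
    (e : Equiv.Perm (Fin m → Fin d)) (f : Equiv.Perm (Fin n → Fin d)) :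
    choiMatrix d m n (Φ.permConj e f) =
      (choiMatrix d m n Φ).submatrix (e.prodCongr f) (e.prodCongr f) := by
  ext ⟨i, k⟩ ⟨j, l⟩
  simp [choiMatrix, submatrix_single_equiv]

theorem choiMatrix_injective (d m n : ℕ) : Function.Injective (choiMatrix d m n) := by
  intro Φ Ψ h
  refine Matrix.ext_linearMap ℂ fun i j => LinearMap.ext_ring ?_
  ext k l
  exact congrFun (congrFun h (i, k)) (j, l)

theorem permutation_invariant_iff_choi_commutes_general (d m n : ℕ)
    (Φ : Matrix (Fin m → Fin d) (Fin m → Fin d) ℂ →ₗ[ℂ]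
         Matrix (Fin n → Fin d) (Fin n → Fin d) ℂ) :
    (∀ (σ : Equiv.Perm (Fin m)) (τ : Equiv.Perm (Fin n))
        (A : Matrix (Fin m → Fin d) (Fin m → Fin d) ℂ),
        Φ (permMatrix d σ * A * (permMatrix d σ)ᴴ) = Φ A ∧
        permMatrix d τ * Φ A * (permMatrix d τ)ᴴ = Φ A) ↔
    (∀ (σ : Equiv.Perm (Fin m)) (τ : Equiv.Perm (Fin n)),
      (Matrix.of fun p q : (Fin m → Fin d) × (Fin n → Fin d) =>
          permMatrix d σ p.1 q.1 * permMatrix d τ p.2 q.2) * choiMatrix d m n Φ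
        = choiMatrix d m n Φ *
          (Matrix.of fun p q : (Fin m → Fin d) × (Fin n → Fin d) =>
            permMatrix d σ p.1 q.1 * permMatrix d τ p.2 q.2)) := by
  have kronecker_eq (σ : Equiv.Perm (Fin m)) (τ : Equiv.Perm (Fin n)) :
      (Matrix.of fun p q : (Fin m → Fin d) × (Fin n → Fin d) =>
          permMatrix d σ p.1 q.1 * permMatrix d τ p.2 q.2) =
        Equiv.Perm.permMatrix ℂ ((σ.precomp (Fin d)).prodCongr (τ.precomp (Fin d))) := by
    rw [permMatrix_eq_permMatrix_precomp, permMatrix_eq_permMatrix_precomp]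
    exact kronecker_permMatrix _ _
  simp only [kronecker_eq, permMatrix_mul_eq_mul_permMatrix_iff, ← choiMatrix_permConj,
    (choiMatrix_injective d m n).eq_iff, LinearMap.ext_iff, LinearMap.permConj_apply]
  simp only [permMatrix_eq_permMatrix_precomp, permMatrix_mul_mul_conjTranspose_permMatrix]
  constructor
  · intro h σ τ A
    rw [(h σ τ _).2, ← (h σ τ _).1, submatrix_submatrix]
    simp
  · intro h σ τ A
    exact ⟨by simpa using (h σ 1 (A.submatrix (σ.precomp _) (σ.precomp _))).symm,
      by simpa using h 1 τ A⟩

theorem permutation_invariant_iff_choi_commutes (d m n : ℕ)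
    (hd : 0 < d) (hm : 0 < m) (hn : 0 < n)
    (Φ : Matrix (Fin m → Fin d) (Fin m → Fin d) ℂ →ₗ[ℂ]
         Matrix (Fin n → Fin d) (Fin n → Fin d) ℂ) :
    (∀ (σ : Equiv.Perm (Fin m)) (τ : Equiv.Perm (Fin n))
        (A : Matrix (Fin m → Fin d) (Fin m → Fin d) ℂ),
        Φ (permMatrix d σ * A * (permMatrix d σ)ᴴ) = Φ A ∧
        permMatrix d τ * Φ A * (permMatrix d τ)ᴴ = Φ A) ↔
    (∀ (σ : Equiv.Perm (Fin m)) (τ : Equiv.Perm (Fin n)),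
      (Matrix.of fun p q : (Fin m → Fin d) × (Fin n → Fin d) =>
          permMatrix d σ p.1 q.1 * permMatrix d τ p.2 q.2) * choiMatrix d m n Φ
        = choiMatrix d m n Φ *
          (Matrix.of fun p q : (Fin m → Fin d) × (Fin n → Fin d) =>
            permMatrix d σ p.1 q.1 * permMatrix d τ p.2 q.2)) :=
  permutation_invariant_iff_choi_commutes_general d m n Φ
end

section
/- Let d, m, n be positive natural numbers, let σ ∈ Equiv.Perm (Fin (m+n)), and let σ^Γ be the partially transposed permutation matrix, i.e. the matrix indexed by ((Fin m → Fin d) × (Fin n → Fin d)) with entries σ^Γ((a,b),(c,e)) = M_σ((a,e),(c,b)), where M_σ is the permutation matrix of σ on (Fin (m+n) → Fin d) with indices split as (Fin m → Fin d) × (Fin n → Fin d). Then for every U in the special unitary group SU(d), σ^Γ commutes with the matrix indexed by ((Fin m → Fin d) × (Fin n → Fin d)) whose entries are ((i,k),(j,l)) ↦ (∏ t, U (i t) (j t)) · (∏ s, conj (U (k s) (l s))) (i.e. with U^{⊗m} ⊗ conj(U)^{⊗n}). -/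
/-!
`P_σ` commutes with `V^{⊗(m+n)} = V^{⊗m} ⊗ V^{⊗n}` for every `V`, since permuting tensor factors
only reorders the product `∏ₜ V (aₜ) (bₜ)`. Partial transposition turns `X (A ⊗ B)` into
`(1 ⊗ Bᵀ) X^Γ (A ⊗ 1)` and `(A ⊗ B) X` into `(A ⊗ 1) X^Γ (1 ⊗ Bᵀ)`, so the partial transpose of
`P_σ (U^{⊗m} ⊗ U^{⊗n}) = (U^{⊗m} ⊗ U^{⊗n}) P_σ`, conjugated by `1 ⊗ C` with `C = ((U^{⊗n})ᵀ)⁻¹`,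
says that `P_σ^Γ` commutes with `U^{⊗m} ⊗ C`. For unitary `U`, `C = conj(U)^{⊗n}`.
-/

open Matrix

/-- Permutation matrix of `σ ∈ S_{m+n}` acting on `(ℂ^d)^{⊗(m+n)}`, with indices split as
`(Fin m → Fin d) × (Fin n → Fin d)` via the identification `Fin (m+n) ≃ Fin m ⊕ Fin n`. -/
noncomputable def splitPermMatrix (d m n : ℕ) (σ : Equiv.Perm (Fin (m + n))) :
    Matrix ((Fin m → Fin d) × (Fin n → Fin d)) ((Fin m → Fin d) × (Fin n → Fin d)) ℂ :=
  Matrix.of fun p q =>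
    if (Sum.elim p.1 p.2 ∘ finSumFinEquiv.symm) ∘ σ = Sum.elim q.1 q.2 ∘ finSumFinEquiv.symm
    then 1 else 0

/-- Partial transpose over the last `n` tensor factors. -/
noncomputable def partialTranspose {α β : Type*}
    (X : Matrix (α × β) (α × β) ℂ) : Matrix (α × β) (α × β) ℂ :=
  Matrix.of fun p q => X (p.1, q.2) (q.1, p.2)

open Kronecker

namespace Matrix

theorem commute_permMatrix_of_forall_apply_eq {κ R : Type*} [Fintype κ] [DecidableEq κ]
    [NonAssocSemiring R] {τ : Equiv.Perm κ} {M : Matrix κ κ R}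
    (h : ∀ a b, M (τ a) (τ b) = M a b) : Commute (τ.permMatrix R) M := by
  change _ * _ = _ * _
  rw [PEquiv.toMatrix_toPEquiv_mul, PEquiv.mul_toMatrix_toPEquiv]
  ext a b
  simpa using h a (τ.symm b)

section TensorPow

variable {R α : Type*} [CommSemiring R] (ι : Type*) [Fintype ι]

def tensorPow (V : Matrix α α R) : Matrix (ι → α) (ι → α) R :=
  of fun a b => ∏ t, V (a t) (b t)

variable {ι}

@[simp]
theorem tensorPow_apply (V : Matrix α α R) (a b : ι → α) :
    tensorPow ι V a b = ∏ t, V (a t) (b t) :=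
  rfl

theorem tensorPow_mul [DecidableEq ι] [Fintype α] (V W : Matrix α α R) :
    tensorPow ι V * tensorPow ι W = tensorPow ι (V * W) := by
  ext a b
  simp only [mul_apply, tensorPow_apply, ← Finset.prod_mul_distrib]
  exact (Fintype.prod_sum fun t c => V (a t) c * W c (b t)).symm

theorem tensorPow_one [DecidableEq ι] [DecidableEq α] :
    tensorPow ι (1 : Matrix α α R) = 1 := by
  ext a b
  by_cases hab : a = b
  · subst hab
    simp
  · obtain ⟨t, ht⟩ := Function.ne_iff.mp hab
    rw [tensorPow_apply, one_apply_ne hab]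
    exact Finset.prod_eq_zero (Finset.mem_univ t) (one_apply_ne ht)

theorem transpose_tensorPow (V : Matrix α α R) : (tensorPow ι V)ᵀ = tensorPow ι Vᵀ :=
  rfl

theorem tensorPow_apply_comp (V : Matrix α α R) (σ : Equiv.Perm ι) (a b : ι → α) :
    tensorPow ι V (a ∘ σ) (b ∘ σ) = tensorPow ι V a b :=
  Equiv.prod_comp σ fun t => V (a t) (b t)

theorem kronecker_tensorPow_apply {m n : ℕ} (V : Matrix α α R)
    (p q : (Fin m → α) × (Fin n → α)) :
    (tensorPow (Fin m) V ⊗ₖ tensorPow (Fin n) V) p q =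
      tensorPow (Fin (m + n)) V (Fin.appendEquiv m n p) (Fin.appendEquiv m n q) := by
  simp [Fin.prod_univ_add]

theorem tensorPow_map_conj_mul_transpose {R : Type*} [CommRing R] [StarRing R] [DecidableEq ι]
    [Fintype α] [DecidableEq α] {U : Matrix α α R} (hU : U ∈ unitaryGroup α R) :
    tensorPow ι (U.map (starRingEnd R)) * (tensorPow ι U)ᵀ = 1 := by
  change tensorPow ι (star U)ᵀ * _ = 1
  rw [transpose_tensorPow, tensorPow_mul, ← transpose_mul, mem_unitaryGroup_iff.mp hU,
    transpose_one, tensorPow_one]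

end TensorPow

end Matrix

theorem Fin.sumElim_comp_finSumFinEquiv_symm {α : Type*} {m n : ℕ} (u : Fin m → α)
    (v : Fin n → α) : Sum.elim u v ∘ finSumFinEquiv.symm = Fin.append u v := by
  funext i
  refine Fin.addCases (fun i => ?_) (fun i => ?_) i <;> simp

section SplitPermMatrix

variable {d m n : ℕ}

theorem splitPermMatrix_eq_permMatrix (σ : Equiv.Perm (Fin (m + n))) :
    splitPermMatrix d m n σ =
      ((Fin.appendEquiv m n).symm.permCongr (σ.symm.arrowCongr (Equiv.refl (Fin d)))).permMatrix
        ℂ := by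
  ext p q
  simp only [splitPermMatrix, of_apply, Fin.sumElim_comp_finSumFinEquiv_symm,
    PEquiv.toMatrix_apply, Equiv.toPEquiv_apply, Option.mem_some_iff, Equiv.permCongr_apply,
    Equiv.symm_symm, Equiv.symm_apply_eq]
  rfl

theorem commute_splitPermMatrix_kronecker_tensorPow (σ : Equiv.Perm (Fin (m + n)))
    (V : Matrix (Fin d) (Fin d) ℂ) :
    Commute (splitPermMatrix d m n σ) (tensorPow (Fin m) V ⊗ₖ tensorPow (Fin n) V) := by
  rw [splitPermMatrix_eq_permMatrix]
  refine commute_permMatrix_of_forall_apply_eq fun p q => ?_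
  simp only [kronecker_tensorPow_apply, Equiv.permCongr_apply, Equiv.symm_symm,
    Equiv.apply_symm_apply]
  exact tensorPow_apply_comp V σ (Fin.appendEquiv m n p) (Fin.appendEquiv m n q)

end SplitPermMatrix

section PartialTranspose

variable {α β : Type*} [Fintype α] [Fintype β] [DecidableEq α] [DecidableEq β]

theorem partialTranspose_mul_kronecker (X : Matrix (α × β) (α × β) ℂ) (A : Matrix α α ℂ)
    (B : Matrix β β ℂ) :
    partialTranspose (X * (A ⊗ₖ B)) = (1 ⊗ₖ Bᵀ) * partialTranspose X * (A ⊗ₖ 1) := by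
  ext ⟨a, b⟩ ⟨c, e⟩
  simp [partialTranspose, mul_apply, Fintype.sum_prod_type, one_apply, Finset.mul_sum,
    mul_assoc, mul_comm, mul_left_comm]

theorem partialTranspose_kronecker_mul (X : Matrix (α × β) (α × β) ℂ) (A : Matrix α α ℂ)
    (B : Matrix β β ℂ) :
    partialTranspose ((A ⊗ₖ B) * X) = (A ⊗ₖ 1) * partialTranspose X * (1 ⊗ₖ Bᵀ) := by
  ext ⟨a, b⟩ ⟨c, e⟩
  simp [partialTranspose, mul_apply, Fintype.sum_prod_type, one_apply, Finset.mul_sum,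
    mul_assoc, mul_comm, mul_left_comm]
  exact Finset.sum_comm

theorem Commute.partialTranspose_kronecker {X : Matrix (α × β) (α × β) ℂ} {A : Matrix α α ℂ}
    {B C : Matrix β β ℂ} (hX : Commute X (A ⊗ₖ B)) (hCB : C * Bᵀ = 1) :
    Commute (partialTranspose X) (A ⊗ₖ C) := by
  have hBC : Bᵀ * C = 1 := mul_eq_one_comm.mp hCB
  have hΓ : (1 ⊗ₖ Bᵀ) * partialTranspose X * (A ⊗ₖ 1) =
      (A ⊗ₖ 1) * partialTranspose X * (1 ⊗ₖ Bᵀ) := by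
    rw [← partialTranspose_mul_kronecker, ← partialTranspose_kronecker_mul, hX.eq]
  have hleft : (A ⊗ₖ 1) * (1 ⊗ₖ C) = A ⊗ₖ C := by
    rw [← mul_kronecker_mul, mul_one, one_mul]
  have hright : (1 ⊗ₖ C) * (A ⊗ₖ 1) = A ⊗ₖ C := by
    rw [← mul_kronecker_mul, mul_one, one_mul]
  have hinv : (1 ⊗ₖ C) * (1 ⊗ₖ Bᵀ) = (1 : Matrix (α × β) (α × β) ℂ) := by
    rw [← mul_kronecker_mul, one_mul, hCB, one_kronecker_one]
  have hinv' : (1 ⊗ₖ Bᵀ) * (1 ⊗ₖ C) = (1 : Matrix (α × β) (α × β) ℂ) := by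
    rw [← mul_kronecker_mul, one_mul, hBC, one_kronecker_one]
  calc partialTranspose X * (A ⊗ₖ C)
      = (1 ⊗ₖ C) * ((1 ⊗ₖ Bᵀ) * partialTranspose X * (A ⊗ₖ 1)) * (1 ⊗ₖ C) := by
        rw [← hleft]
        simp only [← mul_assoc, hinv, one_mul]
    _ = (1 ⊗ₖ C) * ((A ⊗ₖ 1) * partialTranspose X * (1 ⊗ₖ Bᵀ)) * (1 ⊗ₖ C) := by rw [hΓ]
    _ = (A ⊗ₖ C) * partialTranspose X := by
        rw [← hright]
        simp only [mul_assoc, hinv', mul_one]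

end PartialTranspose

theorem partiallyTransposedPerm_commutes_with_mixed_tensorPow_general
    (d m n : ℕ)
    (σ : Equiv.Perm (Fin (m + n)))
    (U : Matrix (Fin d) (Fin d) ℂ) (hU : U ∈ Matrix.specialUnitaryGroup (Fin d) ℂ) :
    partialTranspose (splitPermMatrix d m n σ) *
      (Matrix.of fun p q : (Fin m → Fin d) × (Fin n → Fin d) =>
        (∏ t, U (p.1 t) (q.1 t)) * ∏ s, (starRingEnd ℂ) (U (p.2 s) (q.2 s)))
    = (Matrix.of fun p q : (Fin m → Fin d) × (Fin n → Fin d) =>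
        (∏ t, U (p.1 t) (q.1 t)) * ∏ s, (starRingEnd ℂ) (U (p.2 s) (q.2 s))) *
      partialTranspose (splitPermMatrix d m n σ) := by
  -- The matrix in the statement is `tensorPow (Fin m) U ⊗ₖ tensorPow (Fin n) (U.map conj)` up to
  -- `rfl`; elaborating `hcomm` before matching it against the goal keeps this check cheap.
  have hcomm := (commute_splitPermMatrix_kronecker_tensorPow σ U).partialTranspose_kronecker
    (tensorPow_map_conj_mul_transpose hU.1)
  exact hcomm

theorem partiallyTransposedPerm_commutes_with_mixed_tensorPow
    (d m n : ℕ) (hd : 0 < d) (hm : 0 < m) (hn : 0 < n)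
    (σ : Equiv.Perm (Fin (m + n)))
    (U : Matrix (Fin d) (Fin d) ℂ) (hU : U ∈ Matrix.specialUnitaryGroup (Fin d) ℂ) :
    partialTranspose (splitPermMatrix d m n σ) *
      (Matrix.of fun p q : (Fin m → Fin d) × (Fin n → Fin d) =>
        (∏ t, U (p.1 t) (q.1 t)) * ∏ s, (starRingEnd ℂ) (U (p.2 s) (q.2 s)))
    = (Matrix.of fun p q : (Fin m → Fin d) × (Fin n → Fin d) =>
        (∏ t, U (p.1 t) (q.1 t)) * ∏ s, (starRingEnd ℂ) (U (p.2 s) (q.2 s))) *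
      partialTranspose (splitPermMatrix d m n σ) :=
  partiallyTransposedPerm_commutes_with_mixed_tensorPow_general d m n σ U hU
end

section
/- Let d, k be positive natural numbers and let Π_sym^{k,d} = (1/k!) · Σ_{σ ∈ Equiv.Perm (Fin k)} P_σ be the symmetrizer on (ℂ^d)^{⊗k}, a matrix indexed by (Fin k → Fin d). Then the trace of Π_sym^{k,d} equals the binomial coefficient (k + d − 1).choose k, i.e. the dimension of the symmetric subspace of (ℂ^d)^{⊗k}. -/
/-!
The trace of `P_σ` counts the tuples `a : Fin k → Fin d` with `a ∘ σ = a`, so by Burnside's lemma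
the trace of the symmetrizer is the number of orbits of `Perm (Fin k)` acting on tuples by
precomposition. Two tuples lie in the same orbit iff they have the same sorted rearrangement, i.e.
the same multiset of entries, so the orbits are the `(d + k - 1).choose k` elements of
`Sym (Fin d) k`.
-/

open Matrix

/-- The symmetrizer (projection onto the symmetric subspace) on `(ℂ^d)^{⊗k}`. -/
noncomputable def symmetrizer (d k : ℕ) :
    Matrix (Fin k → Fin d) (Fin k → Fin d) ℂ :=
  ((k.factorial : ℂ)⁻¹) • ∑ σ : Equiv.Perm (Fin k), permMatrix d σ

open Equiv MulAction

-- `DomMulAct.mk σ • a = a ∘ σ`: permutations act on tuples by precomposition.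

theorem trace_permMatrix (d : ℕ) {ι : Type*} [Fintype ι] [DecidableEq ι] (σ : Perm ι) :
    trace (permMatrix d σ) = Nat.card (fixedBy (ι → Fin d) (DomMulAct.mk σ)) := by
  simp only [trace, diag, permMatrix, of_apply, Finset.sum_boole]
  rw [← Fintype.card_subtype, ← Nat.card_eq_fintype_card]
  rfl

theorem sum_card_fixedBy_domMulAct_perm (ι α : Type*) [Fintype ι] [DecidableEq ι] [Finite α] :
    ∑ σ : Perm ι, Nat.card (fixedBy (ι → α) (DomMulAct.mk σ)) =
      Nat.card (orbitRel.Quotient (Perm ι)ᵈᵐᵃ (ι → α)) * (Fintype.card ι).factorial := by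
  classical
  have := Fintype.ofFinite α
  let _ : Fintype (Perm ι)ᵈᵐᵃ := Fintype.ofEquiv (Perm ι) DomMulAct.mk
  simp only [Nat.card_eq_fintype_card]
  rw [← Fintype.card_perm, Fintype.card_congr (DomMulAct.mk (M := Perm ι)),
    ← sum_card_fixedBy_eq_card_orbits_mul_card_group]
  exact Fintype.sum_equiv DomMulAct.mk _ _ fun _ => rfl

theorem orbitRel_domMulAct_perm_iff {ι α : Type*} (a b : ι → α) :
    orbitRel (Perm ι)ᵈᵐᵃ (ι → α) a b ↔ ∃ σ : Perm ι, b ∘ σ = a := by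
  rw [orbitRel_apply, mem_orbit_iff]
  exact DomMulAct.mk.surjective.exists

theorem exists_comp_perm_eq_iff_perm_ofFn {α : Type*} [LinearOrder α] {n : ℕ}
    (a b : Fin n → α) : (∃ σ : Perm (Fin n), a ∘ σ = b) ↔ (List.ofFn a).Perm (List.ofFn b) := by
  refine ⟨fun ⟨σ, hσ⟩ => hσ ▸ (σ.ofFn_comp_perm a).symm, fun h => ?_⟩
  have hsorted : a ∘ Tuple.sort a = b ∘ Tuple.sort b := by
    refine List.ofFn_injective ((List.Perm.eq_of_sortedLE (Tuple.monotone_sort a).sortedLE_ofFn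
      (Tuple.monotone_sort b).sortedLE_ofFn) ?_)
    exact ((Tuple.sort a).ofFn_comp_perm a).trans (h.trans ((Tuple.sort b).ofFn_comp_perm b).symm)
  refine ⟨(Tuple.sort b).symm.trans (Tuple.sort a), funext fun i => ?_⟩
  simpa using congrFun hsorted ((Tuple.sort b).symm i)

def orbitRelQuotientEquivSym (α : Type*) [LinearOrder α] (n : ℕ) :
    orbitRel.Quotient (Perm (Fin n))ᵈᵐᵃ (Fin n → α) ≃ Sym α n :=
  (Quotient.congr (vectorEquivFin α n).symm fun a b => by
    rw [orbitRel_domMulAct_perm_iff, exists_comp_perm_eq_iff_perm_ofFn, List.perm_comm,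
      ← List.Vector.toList_ofFn a, ← List.Vector.toList_ofFn b]
    rfl).trans Sym.symEquivSym'.symm

theorem trace_symmetrizer_general (d k : ℕ) :
    Matrix.trace (symmetrizer d k) = ((k + d - 1).choose k : ℂ) := by
  have hsum : ∑ σ : Perm (Fin k), trace (permMatrix d σ) =
      ((d + k - 1).choose k * k.factorial : ℕ) := by
    simp_rw [trace_permMatrix]
    rw [← Nat.cast_sum, sum_card_fixedBy_domMulAct_perm,
      Nat.card_congr (orbitRelQuotientEquivSym _ _), Nat.card_eq_fintype_card,
      Sym.card_sym_eq_choose, Fintype.card_fin, Fintype.card_fin]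
  rw [symmetrizer, trace_smul, trace_sum, hsum, smul_eq_mul, Nat.cast_mul, inv_mul_eq_div,
    mul_div_cancel_right₀ _ (Nat.cast_ne_zero.2 k.factorial_ne_zero), add_comm d k]

theorem trace_symmetrizer (d k : ℕ) (hd : 0 < d) (hk : 0 < k) :
    Matrix.trace (symmetrizer d k) = ((k + d - 1).choose k : ℂ) :=
  trace_symmetrizer_general d k
end

section
/- Let μ be a Young diagram. For a cell (i,j) ∈ μ write n_r(i,j) = μ.rowLen i − j − 1 (the number of cells of μ strictly to the right of (i,j) in row i) and n_d(i,j) = μ.colLen j − i − 1 (the number of cells of μ strictly below (i,j) in column j). Suppose p : ℕ × ℕ → ℝ satisfies, for every cell (i,j) ∈ μ with n_r(i,j) + n_d(i,j) > 0, the recurrence (n_r(i,j) + n_d(i,j)) · p(i,j) = Σ_{j'} p(i,j') + Σ_{i'} p(i',j), where j' ranges over columns j+1, …, μ.rowLen i − 1 and i' ranges over rows i+1, …, μ.colLen j − 1. If (i,j) and (i,j+1) are both cells of μ and n_d(i,j) = n_d(i,j+1), then p(i,j) = p(i,j+1). -/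
/-!
Comparing the recurrence at `(i, j)` and at `(i, j + 1)`: the arm of `(i, j)` is `(i, j + 1)`
followed by the arm of `(i, j + 1)`, and when the two columns have the same length the legs
carry equal values by induction on the leg length. Subtracting the two equations leaves
`(n + 1) p (i, j) = (n + 1) p (i, j + 1)`.
-/

namespace YoungDiagram

def ArmLegRecurrenceAt (μ : YoungDiagram) (p : ℕ × ℕ → ℝ) (i j : ℕ) : Prop :=
  (((μ.rowLen i - j - 1) + (μ.colLen j - i - 1) : ℕ) : ℝ) * p (i, j)
    = (∑ j' ∈ Finset.Ico (j + 1) (μ.rowLen i), p (i, j'))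
      + ∑ i' ∈ Finset.Ico (i + 1) (μ.colLen j), p (i', j)

variable {μ : YoungDiagram}

theorem armLegRecurrenceAt_of_eq_zero (p : ℕ × ℕ → ℝ) {i j : ℕ} (hij : (i, j) ∈ μ)
    (h0 : (μ.rowLen i - j - 1) + (μ.colLen j - i - 1) = 0) : μ.ArmLegRecurrenceAt p i j := by
  have hrow : μ.rowLen i = j + 1 := by have := μ.mem_iff_lt_rowLen.mp hij; omega
  have hcol : μ.colLen j = i + 1 := by have := μ.mem_iff_lt_colLen.mp hij; omega
  simp [ArmLegRecurrenceAt, hrow, hcol]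

theorem colLen_eq_colLen_succ_of_tsub_eq {i j : ℕ} (hij : (i, j + 1) ∈ μ)
    (h : μ.colLen j - i - 1 = μ.colLen (j + 1) - i - 1) : μ.colLen j = μ.colLen (j + 1) := by
  have hi := μ.mem_iff_lt_colLen.mp hij
  have hanti := μ.colLen_anti j (j + 1) (Nat.le_succ j)
  omega

theorem eq_of_armLegRecurrenceAt_of_colLen_eq {p : ℕ × ℕ → ℝ}
    (hrec : ∀ i j, (i, j) ∈ μ → μ.ArmLegRecurrenceAt p i j) {i j : ℕ} (hij : (i, j + 1) ∈ μ)
    (hcol : μ.colLen j = μ.colLen (j + 1)) : p (i, j) = p (i, j + 1) := by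
  have hrow : j + 1 < μ.rowLen i := μ.mem_iff_lt_rowLen.mp hij
  have legs_eq : ∑ i' ∈ Finset.Ico (i + 1) (μ.colLen j), p (i', j)
      = ∑ i' ∈ Finset.Ico (i + 1) (μ.colLen (j + 1)), p (i', j + 1) := by
    rw [← hcol]
    refine Finset.sum_congr rfl fun i' hmem => ?_
    have hlt : i' < μ.colLen (j + 1) := hcol ▸ (Finset.mem_Ico.mp hmem).2
    exact eq_of_armLegRecurrenceAt_of_colLen_eq hrec (μ.mem_iff_lt_colLen.mpr hlt) hcol
  have hcoef : μ.rowLen i - j - 1 + (μ.colLen j - i - 1)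
      = (μ.rowLen i - (j + 1) - 1 + (μ.colLen (j + 1) - i - 1)) + 1 := by omega
  have hleft := hrec i j (μ.up_left_mem le_rfl (Nat.le_succ j) hij)
  have hright := hrec i (j + 1) hij
  unfold ArmLegRecurrenceAt at hleft hright
  rw [hcoef, Finset.sum_eq_sum_Ico_succ_bot hrow, legs_eq, Nat.cast_succ] at hleft
  refine mul_left_cancel₀ (by positivity :
    ((μ.rowLen i - (j + 1) - 1 + (μ.colLen (j + 1) - i - 1) : ℕ) : ℝ) + 1 ≠ 0) ?_
  linear_combination hleft - hright
termination_by μ.colLen j - i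
decreasing_by
  have := (Finset.mem_Ico.mp hmem).1
  omega

end YoungDiagram

theorem young_recurrence_row_neighbors_general (μ : YoungDiagram) (p : ℕ × ℕ → ℝ)
    (hrec : ∀ i j : ℕ, (i, j) ∈ μ →
      0 < (μ.rowLen i - j - 1) + (μ.colLen j - i - 1) →
      (((μ.rowLen i - j - 1) + (μ.colLen j - i - 1) : ℕ) : ℝ) * p (i, j)
        = (∑ j' ∈ Finset.Ico (j + 1) (μ.rowLen i), p (i, j'))
          + ∑ i' ∈ Finset.Ico (i + 1) (μ.colLen j), p (i', j))
    (i j : ℕ) (hij' : (i, j + 1) ∈ μ)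
    (hnd : μ.colLen j - i - 1 = μ.colLen (j + 1) - i - 1) :
    p (i, j) = p (i, j + 1) := by
  have hrec_all : ∀ i j, (i, j) ∈ μ → μ.ArmLegRecurrenceAt p i j := fun i j hij =>
    (Nat.eq_zero_or_pos _).elim (YoungDiagram.armLegRecurrenceAt_of_eq_zero p hij)
      (hrec i j hij)
  exact YoungDiagram.eq_of_armLegRecurrenceAt_of_colLen_eq hrec_all hij'
    (YoungDiagram.colLen_eq_colLen_succ_of_tsub_eq hij' hnd)

/-- If `p` satisfies the jump-chain recurrence on a Young diagram `μ`, then two horizontally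
adjacent cells with the same number of cells below have the same value of `p`. -/
theorem young_recurrence_row_neighbors (μ : YoungDiagram) (p : ℕ × ℕ → ℝ)
    (hrec : ∀ i j : ℕ, (i, j) ∈ μ →
      0 < (μ.rowLen i - j - 1) + (μ.colLen j - i - 1) →
      (((μ.rowLen i - j - 1) + (μ.colLen j - i - 1) : ℕ) : ℝ) * p (i, j)
        = (∑ j' ∈ Finset.Ico (j + 1) (μ.rowLen i), p (i, j'))
          + ∑ i' ∈ Finset.Ico (i + 1) (μ.colLen j), p (i', j))
    (i j : ℕ) (hij : (i, j) ∈ μ) (hij' : (i, j + 1) ∈ μ)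
    (hnd : μ.colLen j - i - 1 = μ.colLen (j + 1) - i - 1) :
    p (i, j) = p (i, j + 1) :=
  young_recurrence_row_neighbors_general μ p hrec i j hij' hnd
end

section
/- Let μ be a Young diagram. For a cell (i,j) ∈ μ write n_r(i,j) = μ.rowLen i − j − 1 (the number of cells of μ strictly to the right of (i,j) in row i) and n_d(i,j) = μ.colLen j − i − 1 (the number of cells of μ strictly below (i,j) in column j). Suppose p : ℕ × ℕ → ℝ satisfies, for every cell (i,j) ∈ μ with n_r(i,j) + n_d(i,j) > 0, the recurrence (n_r(i,j) + n_d(i,j)) · p(i,j) = Σ_{j'} p(i,j') + Σ_{i'} p(i',j), where j' ranges over columns j+1, …, μ.rowLen i − 1 and i' ranges over rows i+1, …, μ.colLen j − 1. If (i,j) and (i+1,j) are both cells of μ and n_r(i,j) = n_r(i+1,j), then p(i,j) = p(i+1,j). -/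
/-!
Rows `i` and `i + 1` have the same length, so by downward induction on `j` the two rows
already agree to the right of column `j`. The recurrences at `(i, j)` and `(i + 1, j)` then
share their row sums and the column sum below `i + 1`; the one at `(i, j)` has one extra
summand `p (i + 1, j)` and a coefficient larger by one, and subtracting the two gives
`(c + 1) * (p (i, j) - p (i + 1, j)) = 0`. The case `(i + 1, j)` with coefficient `0` is
harmless, since the recurrence holds trivially there (both sums are empty).
-/

namespace YoungDiagram

variable {μ : YoungDiagram} {p : ℕ × ℕ → ℝ} {i j : ℕ}

def RecurrenceAt (μ : YoungDiagram) (p : ℕ × ℕ → ℝ) (i j : ℕ) : Prop :=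
  (((μ.rowLen i - j - 1) + (μ.colLen j - i - 1) : ℕ) : ℝ) * p (i, j)
    = (∑ j' ∈ Finset.Ico (j + 1) (μ.rowLen i), p (i, j'))
      + ∑ i' ∈ Finset.Ico (i + 1) (μ.colLen j), p (i', j)

theorem recurrenceAt_of_eq_zero (h : (μ.rowLen i - j - 1) + (μ.colLen j - i - 1) = 0) :
    RecurrenceAt μ p i j := by
  have hrow : Finset.Ico (j + 1) (μ.rowLen i) = ∅ := Finset.Ico_eq_empty_of_le (by omega)
  have hcol : Finset.Ico (i + 1) (μ.colLen j) = ∅ := Finset.Ico_eq_empty_of_le (by omega)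
  simp [RecurrenceAt, h, hrow, hcol]

theorem eq_of_recurrenceAt_of_rowLen_succ_eq (hrow : μ.rowLen (i + 1) = μ.rowLen i)
    (hcell : (i + 1, j) ∈ μ) (h₀ : RecurrenceAt μ p i j) (h₁ : RecurrenceAt μ p (i + 1) j)
    (hright : ∀ j' ∈ Finset.Ico (j + 1) (μ.rowLen i), p (i, j') = p (i + 1, j')) :
    p (i, j) = p (i + 1, j) := by
  have hcol : i + 1 < μ.colLen j := mem_iff_lt_colLen.mp hcell
  have hj : j < μ.rowLen i := hrow ▸ mem_iff_lt_rowLen.mp hcell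
  set c := (μ.rowLen i - j - 1) + (μ.colLen j - (i + 1) - 1)
  have hc : (μ.rowLen i - j - 1) + (μ.colLen j - i - 1) = c + 1 := by omega
  unfold RecurrenceAt at h₀ h₁
  rw [hc, Finset.sum_eq_sum_Ico_succ_bot hcol, Finset.sum_congr rfl hright] at h₀
  rw [hrow] at h₁
  push_cast at h₀
  have hzero : ((c : ℝ) + 1) * (p (i, j) - p (i + 1, j)) = 0 := by linarith
  have hpos : (c : ℝ) + 1 ≠ 0 := by positivity
  exact sub_eq_zero.mp ((mul_eq_zero.mp hzero).resolve_left hpos)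

theorem eq_of_forall_recurrenceAt_of_rowLen_succ_eq
    (hrec : ∀ i j, (i, j) ∈ μ → RecurrenceAt μ p i j) (hrow : μ.rowLen (i + 1) = μ.rowLen i)
    (j : ℕ) (hcell : (i + 1, j) ∈ μ) : p (i, j) = p (i + 1, j) :=
  eq_of_recurrenceAt_of_rowLen_succ_eq hrow hcell
    (hrec i j (μ.up_left_mem (Nat.le_succ i) le_rfl hcell)) (hrec (i + 1) j hcell)
    fun j' hj' => by
      have hj'mem := Finset.mem_Ico.mp hj'
      exact eq_of_forall_recurrenceAt_of_rowLen_succ_eq hrec hrow j'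
        (mem_iff_lt_rowLen.mpr (by omega))
termination_by μ.rowLen i - j
decreasing_by omega

end YoungDiagram

open YoungDiagram in
theorem young_recurrence_column_neighbors_general (μ : YoungDiagram) (p : ℕ × ℕ → ℝ)
    (hrec : ∀ i j : ℕ, (i, j) ∈ μ →
      0 < (μ.rowLen i - j - 1) + (μ.colLen j - i - 1) →
      (((μ.rowLen i - j - 1) + (μ.colLen j - i - 1) : ℕ) : ℝ) * p (i, j)
        = (∑ j' ∈ Finset.Ico (j + 1) (μ.rowLen i), p (i, j'))
          + ∑ i' ∈ Finset.Ico (i + 1) (μ.colLen j), p (i', j))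
    (i j : ℕ) (hij' : (i + 1, j) ∈ μ)
    (hnr : μ.rowLen i - j - 1 = μ.rowLen (i + 1) - j - 1) :
    p (i, j) = p (i + 1, j) := by
  have hrec' : ∀ i j, (i, j) ∈ μ → RecurrenceAt μ p i j := fun i j hcell =>
    (Nat.eq_zero_or_pos _).elim recurrenceAt_of_eq_zero (hrec i j hcell)
  have hrow : μ.rowLen (i + 1) = μ.rowLen i := by
    have := mem_iff_lt_rowLen.mp hij'
    have := μ.rowLen_anti i (i + 1) (Nat.le_succ i)
    omega
  exact eq_of_forall_recurrenceAt_of_rowLen_succ_eq hrec' hrow j hij'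

/-- If `p` satisfies the jump-chain recurrence on a Young diagram `μ`, then two vertically
adjacent cells with the same number of cells to the right have the same value of `p`. -/
theorem young_recurrence_column_neighbors (μ : YoungDiagram) (p : ℕ × ℕ → ℝ)
    (hrec : ∀ i j : ℕ, (i, j) ∈ μ →
      0 < (μ.rowLen i - j - 1) + (μ.colLen j - i - 1) →
      (((μ.rowLen i - j - 1) + (μ.colLen j - i - 1) : ℕ) : ℝ) * p (i, j)
        = (∑ j' ∈ Finset.Ico (j + 1) (μ.rowLen i), p (i, j'))
          + ∑ i' ∈ Finset.Ico (i + 1) (μ.colLen j), p (i', j))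
    (i j : ℕ) (hij : (i, j) ∈ μ) (hij' : (i + 1, j) ∈ μ)
    (hnr : μ.rowLen i - j - 1 = μ.rowLen (i + 1) - j - 1) :
    p (i, j) = p (i + 1, j) :=
  young_recurrence_column_neighbors_general μ p hrec i j hij' hnr
end
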